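/- Let n ≥ 2 and 1 ≤ m ≤ n − 1 be natural numbers, k ∈ ℂ with k ≠ −n, K = k + n, and let Γ be the (n+1)×(n+1) matrix of the n[m] realization: Γ_{p,p} = 2K for p ∈ {1,…,n} ∖ {n−m, n−m+1}, Γ_{n−m,n−m} = Γ_{n−m+1,n−m+1} = 1, Γ_{n+1,n+1} = 0, Γ_{p,p+1} = Γ_{p+1,p} = −K for 1 ≤ p ≤ n − 1 with p ≠ n − m, Γ_{n−m,n−m+1} = Γ_{n−m+1,n−m} = K − 1, Γ_{n−m,n+1} = Γ_{n+1,n−m} = 1, Γ_{n−m+1,n+1} = Γ_{n+1,n−m+1} = −1, all other entries 0. Define c* ∈ ℂ^{n+1} by c*_p = p/(n·K) for 1 ≤ p ≤ n − m, c*_q = (q − 1)/(n·K) for n − m + 1 ≤ q ≤ n, and c*_{n+1} = −1/n. Then: (i) Γ·c* equals the n-th standard basis vector e_n; in particular (ii) (Γ·c*)_{n+1} = 0 and (iii) c* ⬝ (Γ·c*) = (n − 1)/(n(k + n)). -/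

import Mathlib

/-!
Compute `Γ c*` row by row, with `s = n - m` and `K = k + n`. Away from `ψ₊, ψ₋, ξ` the rows of
`Γ` are `(-K, 2K, -K)` and `c*` is affine with slope `1/(nK)` on either side of the cut between
`ψ₊` and `ψ₋`, so these rows see a vanishing second difference, except row `n`, which has no right
neighbour and gives `1`. The rows of `ψ₊, ψ₋, ξ` are checked directly. Then (iii) is
`c*_n = (n - 1)/(nK)`.
-/

open Finset

/-- Entry `(p, q)` of `Γ` in 1-based indices; entries with `p` or `q` beyond `n + 1` are junk. -/
noncomputable def gramEntry (n s : ℕ) (K : ℂ) (p q : ℕ) : ℂ :=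
  if p = q then
    (if p = s ∨ p = s + 1 then 1 else if p = n + 1 then 0 else 2 * K)
  else if (p + 1 = q ∧ p ≤ n - 1 ∧ p ≠ s) ∨ (q + 1 = p ∧ q ≤ n - 1 ∧ q ≠ s) then -K
  else if (p = s ∧ q = s + 1) ∨ (q = s ∧ p = s + 1) then K - 1
  else if (p = s ∧ q = n + 1) ∨ (q = s ∧ p = n + 1) then 1
  else if (p = s + 1 ∧ q = n + 1) ∨ (q = s + 1 ∧ p = n + 1) then -1
  else 0

noncomputable def dualCoord (n s : ℕ) (K : ℂ) (q : ℕ) : ℂ :=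
  if q ≤ s then (q : ℂ) / (n * K)
  else if q ≤ n then ((q : ℂ) - 1) / (n * K)
  else -1 / n

noncomputable def gramMulDual (n s : ℕ) (K : ℂ) (p : ℕ) : ℂ :=
  ∑ j : Fin (n + 1), gramEntry n s K p (j + 1) * dualCoord n s K (j + 1)

def GramSupport (n s p q : ℕ) : Prop :=
  (p = q ∨ p + 1 = q ∨ q + 1 = p) ∧ p ≤ n ∧ q ≤ n ∨
    p = n + 1 ∧ (q = s ∨ q = s + 1) ∨ q = n + 1 ∧ (p = s ∨ p = s + 1)

theorem Fin.sum_succ_eq_sum_of_support {M : Type*} [AddCommMonoid M] {N : ℕ} {f : ℕ → M}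
    (S : Finset ℕ) (hout : ∀ q ∈ S, q = 0 ∨ N < q → f q = 0)
    (hin : ∀ q, 1 ≤ q → q ≤ N → q ∉ S → f q = 0) :
    ∑ j : Fin N, f (j + 1) = ∑ q ∈ S, f q :=
  calc ∑ j : Fin N, f (j + 1) = ∑ q ∈ Ico 1 (N + 1), f q := by
        rw [Fin.sum_univ_eq_sum_range (fun j => f (j + 1)), range_eq_Ico, sum_Ico_add', zero_add]
    _ = ∑ q ∈ Ico 1 (N + 1) ∪ S, f q :=
        sum_subset subset_union_left fun q hq hqI => by
          rw [mem_Ico] at hqI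
          exact hout q ((mem_union.1 hq).resolve_left (by rwa [mem_Ico])) (by omega)
    _ = ∑ q ∈ S, f q :=
        (sum_subset subset_union_right fun q hq hqS => by
          have hqI := mem_Ico.1 ((mem_union.1 hq).resolve_right hqS)
          exact hin q hqI.1 (by omega) hqS).symm

section

variable {n s : ℕ} {K : ℂ}

theorem gramEntry_eq_zero (hsn : s < n) {p q : ℕ} (hp : p ≤ n + 1)
    (h : ¬GramSupport n s p q) : gramEntry n s K p q = 0 := by
  unfold GramSupport at h
  unfold gramEntry
  split_ifs <;> first | rfl | omega

theorem dualCoord_zero : dualCoord n s K 0 = 0 := by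
  simp [dualCoord]

/-- `S` may contain the phantom column `0`, harmless since `dualCoord n s K 0 = 0`; this lets the
first row, including `ψ₊` when `s = 1`, use the same support as an interior row. -/
theorem gramMulDual_eq_sum (hsn : s < n) {p : ℕ} (hp : p ≤ n + 1) (S : Finset ℕ)
    (hS : ∀ q ∈ S, q ≤ n + 1) (hsupp : ∀ q, GramSupport n s p q → q ∈ S) :
    gramMulDual n s K p = ∑ q ∈ S, gramEntry n s K p q * dualCoord n s K q := by
  refine Fin.sum_succ_eq_sum_of_support (f := fun q => gramEntry n s K p q * dualCoord n s K q) S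
    (fun q hq hq0 => ?_) (fun q _ _ hqS => ?_)
  · obtain rfl : q = 0 := by have := hS q hq; omega
    rw [dualCoord_zero, mul_zero]
  · rw [gramEntry_eq_zero hsn hp (mt (hsupp q) hqS), zero_mul]

theorem gramMulDual_xi (hsn : s < n) :
    gramMulDual n s K (n + 1) = 0 := by
  rw [gramMulDual_eq_sum hsn le_rfl {s, s + 1}
      (by simp only [mem_insert, mem_singleton, forall_eq_or_imp, forall_eq]; omega)
      (fun q hq => by simp only [GramSupport, mem_insert, mem_singleton] at hq ⊢; omega),
    sum_pair (by omega)]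
  simp (disch := omega) only [gramEntry, dualCoord, if_pos, if_neg, true_and, and_true, or_true,
    ↓reduceIte]
  push_cast
  field_simp
  ring

theorem gramMulDual_psiPlus (hs : 1 ≤ s) (hsn : s < n) (hK : K ≠ 0) :
    gramMulDual n s K s = 0 := by
  rw [gramMulDual_eq_sum hsn (by omega) {s - 1, s, s + 1, n + 1}
      (by simp only [mem_insert, mem_singleton, forall_eq_or_imp, forall_eq]; omega)
      (fun q hq => by simp only [GramSupport, mem_insert, mem_singleton] at hq ⊢; omega),
    sum_insert (by simp only [mem_insert, mem_singleton]; omega),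
    sum_insert (by simp only [mem_insert, mem_singleton]; omega), sum_pair (by omega)]
  simp (disch := omega) only [gramEntry, dualCoord, if_pos, if_neg, true_and, and_true, true_or,
    ↓reduceIte]
  push_cast [Nat.cast_sub hs]
  field_simp
  ring

theorem gramMulDual_psiMinus (hsn : s + 1 < n) (hK : K ≠ 0) :
    gramMulDual n s K (s + 1) = 0 := by
  rw [gramMulDual_eq_sum (by omega) (by omega) {s, s + 1, s + 2, n + 1}
      (by simp only [mem_insert, mem_singleton, forall_eq_or_imp, forall_eq]; omega)
      (fun q hq => by simp only [GramSupport, mem_insert, mem_singleton] at hq ⊢; omega),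
    sum_insert (by simp only [mem_insert, mem_singleton]; omega),
    sum_insert (by simp only [mem_insert, mem_singleton]; omega), sum_pair (by omega)]
  simp (disch := omega) only [gramEntry, dualCoord, if_pos, if_neg, true_and, and_true, true_or,
    or_true, ↓reduceIte]
  push_cast
  field_simp
  ring

theorem gramMulDual_psiMinus_of_eq (hsn : s + 1 = n) (hn : (n : ℂ) ≠ 0) (hK : K ≠ 0) :
    gramMulDual n s K (s + 1) = 1 := by
  rw [gramMulDual_eq_sum (by omega) (by omega) {s, s + 1, n + 1}
      (by simp only [mem_insert, mem_singleton, forall_eq_or_imp, forall_eq]; omega)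
      (fun q hq => by simp only [GramSupport, mem_insert, mem_singleton] at hq ⊢; omega),
    sum_insert (by simp only [mem_insert, mem_singleton]; omega), sum_pair (by omega)]
  simp (disch := omega) only [gramEntry, dualCoord, if_pos, if_neg, true_and, and_true, true_or,
    or_true, ↓reduceIte]
  subst hsn
  push_cast at hn ⊢
  field_simp
  ring

theorem gramMulDual_last (hsn : s + 1 < n) (hn : (n : ℂ) ≠ 0) (hK : K ≠ 0) :
    gramMulDual n s K n = 1 := by
  obtain ⟨p, rfl⟩ : ∃ p, n = p + 2 := ⟨n - 2, by omega⟩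
  rw [gramMulDual_eq_sum (by omega) (by omega) {p + 1, p + 2}
      (by simp only [mem_insert, mem_singleton, forall_eq_or_imp, forall_eq]; omega)
      (fun q hq => by simp only [GramSupport, mem_insert, mem_singleton] at hq ⊢; omega),
    sum_pair (by omega)]
  simp (disch := omega) only [gramEntry, dualCoord, if_pos, if_neg, true_and, ↓reduceIte]
  push_cast at hn ⊢
  field_simp
  ring

theorem gramMulDual_succ (hsn : s < n) {p : ℕ} (hp : p + 2 ≤ n) (hps : p ≠ s) (hps' : p + 1 ≠ s) :
    gramMulDual n s K (p + 1) =
      -K * (dualCoord n s K p - 2 * dualCoord n s K (p + 1) + dualCoord n s K (p + 2)) := by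
  rw [gramMulDual_eq_sum hsn (by omega) {p, p + 1, p + 2}
      (by simp only [mem_insert, mem_singleton, forall_eq_or_imp, forall_eq]; omega)
      (fun q hq => by simp only [GramSupport, mem_insert, mem_singleton] at hq ⊢; omega),
    sum_insert (by simp only [mem_insert, mem_singleton]; omega), sum_pair (by omega)]
  simp (disch := omega) only [gramEntry, if_pos, if_neg, true_and, ↓reduceIte]
  ring

theorem dualCoord_second_diff {p : ℕ} (hp : p + 2 ≤ s ∨ s < p ∧ p + 2 ≤ n) :
    dualCoord n s K p - 2 * dualCoord n s K (p + 1) + dualCoord n s K (p + 2) = 0 := by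
  rcases hp with hp | hp
  · simp (disch := omega) only [dualCoord, if_pos]
    push_cast
    ring
  · simp (disch := omega) only [dualCoord, if_pos, if_neg]
    push_cast
    ring

theorem gramMulDual_eq_ite (hs : 1 ≤ s) (hsn : s < n) (hK : K ≠ 0) {p : ℕ} (hp1 : 1 ≤ p)
    (hp : p ≤ n + 1) : gramMulDual n s K p = if p = n then 1 else 0 := by
  have hn : (n : ℂ) ≠ 0 := Nat.cast_ne_zero.mpr (by omega)
  obtain rfl | rfl | rfl | ⟨hps, hps', hpn⟩ :
      p = n + 1 ∨ p = s ∨ p = s + 1 ∨ p ≠ s ∧ p ≠ s + 1 ∧ p ≤ n := by omega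
  · rw [gramMulDual_xi hsn, if_neg (by omega)]
  · rw [gramMulDual_psiPlus hs hsn hK, if_neg (by omega)]
  · obtain hsn' | hsn' := (by omega : s + 1 < n ∨ s + 1 = n)
    · rw [gramMulDual_psiMinus hsn' hK, if_neg (by omega)]
    · rw [gramMulDual_psiMinus_of_eq hsn' hn hK, if_pos hsn']
  · obtain rfl | hpn' := eq_or_ne p n
    · rw [gramMulDual_last (by omega) hn hK, if_pos rfl]
    · obtain ⟨p, rfl⟩ : ∃ q, p = q + 1 := ⟨p - 1, by omega⟩
      rw [gramMulDual_succ hsn (by omega) (by omega) hps, dualCoord_second_diff (by omega),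
        mul_zero, if_neg hpn']

end

theorem Vnm_dual_momentum_coords_general (n m : ℕ) (hm1 : 1 ≤ m)
    (hm2 : m ≤ n - 1) (k : ℂ) (hk : k ≠ -(n : ℂ))
    (Γ : Matrix (Fin (n + 1)) (Fin (n + 1)) ℂ)
    (hΓ : ∀ i j : Fin (n + 1), Γ i j =
      (let p := (i : ℕ) + 1
       let q := (j : ℕ) + 1
       if p = q then
         (if p = n - m ∨ p = n - m + 1 then 1
          else if p = n + 1 then 0 else 2 * (k + n))
       else if (p + 1 = q ∧ p ≤ n - 1 ∧ p ≠ n - m) ∨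
               (q + 1 = p ∧ q ≤ n - 1 ∧ q ≠ n - m) then -(k + n)
       else if (p = n - m ∧ q = n - m + 1) ∨
               (q = n - m ∧ p = n - m + 1) then k + n - 1
       else if (p = n - m ∧ q = n + 1) ∨ (q = n - m ∧ p = n + 1) then 1
       else if (p = n - m + 1 ∧ q = n + 1) ∨
               (q = n - m + 1 ∧ p = n + 1) then -1
       else 0))
    (c : Fin (n + 1) → ℂ)
    (hc : ∀ i : Fin (n + 1), c i =
      (let p := (i : ℕ) + 1
       if p ≤ n - m then (p : ℂ) / (n * (k + n))
       else if p ≤ n then ((p : ℂ) - 1) / (n * (k + n))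
       else -1 / n)) :
    Γ.mulVec c = (fun i : Fin (n + 1) => if (i : ℕ) = n - 1 then 1 else 0) ∧
    Γ.mulVec c (Fin.last n) = 0 ∧
    dotProduct c (Γ.mulVec c) = ((n : ℂ) - 1) / (n * (k + n)) := by
  have hK : k + n ≠ 0 := fun h => hk (eq_neg_of_add_eq_zero_left h)
  have hrow (i : Fin (n + 1)) : Γ.mulVec c i = gramMulDual n (n - m) (k + n) (i + 1) := by
    simp only [Matrix.mulVec, dotProduct, hΓ, hc]
    rfl
  have hmulVec : Γ.mulVec c = Pi.single (⟨n - 1, by omega⟩ : Fin (n + 1)) 1 := by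
    funext i
    rw [hrow, gramMulDual_eq_ite (by omega) (by omega) hK (by omega) (by omega)]
    simp only [Pi.single_apply, Fin.ext_iff]
    exact if_congr (by omega) rfl rfl
  refine ⟨?_, ?_, ?_⟩
  · rw [hmulVec]
    funext i
    simp only [Pi.single_apply, Fin.ext_iff]
  · rw [hmulVec, Pi.single_apply, if_neg (by simp [Fin.ext_iff]; omega)]
  · rw [hmulVec, dotProduct_single, mul_one, hc]
    dsimp only
    rw [if_neg (by omega), if_pos (by omega), Nat.sub_add_cancel (by omega)]

/-- The coefficient vector `c*` of the momentum `v*_{n,m}(k)` of the dual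
vertex operator `V*_{n,m}` in the ordered basis
`a_{n-m-1}, …, a_1, ψ_+, ψ_-, a_{-1}, …, a_{-m+1}, ξ` satisfies
(i) `Γ·c* = e_n`; in particular (ii) `(Γ·c*)_{n+1} = 0` (locality of
`V*_{n,m}`), and (iii) `c* ⬝ (Γ·c*) = (n-1)/(n(k+n))` (the momentum length
squared), where `Γ` is the Gram matrix of the `n[m]` realization. -/
theorem Vnm_dual_momentum_coords (n m : ℕ) (hn : 2 ≤ n) (hm1 : 1 ≤ m)
    (hm2 : m ≤ n - 1) (k : ℂ) (hk : k ≠ -(n : ℂ))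
    (Γ : Matrix (Fin (n + 1)) (Fin (n + 1)) ℂ)
    (hΓ : ∀ i j : Fin (n + 1), Γ i j =
      (let p := (i : ℕ) + 1
       let q := (j : ℕ) + 1
       if p = q then
         (if p = n - m ∨ p = n - m + 1 then 1
          else if p = n + 1 then 0 else 2 * (k + n))
       else if (p + 1 = q ∧ p ≤ n - 1 ∧ p ≠ n - m) ∨
               (q + 1 = p ∧ q ≤ n - 1 ∧ q ≠ n - m) then -(k + n)
       else if (p = n - m ∧ q = n - m + 1) ∨
               (q = n - m ∧ p = n - m + 1) then k + n - 1
       else if (p = n - m ∧ q = n + 1) ∨ (q = n - m ∧ p = n + 1) then 1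
       else if (p = n - m + 1 ∧ q = n + 1) ∨
               (q = n - m + 1 ∧ p = n + 1) then -1
       else 0))
    (c : Fin (n + 1) → ℂ)
    (hc : ∀ i : Fin (n + 1), c i =
      (let p := (i : ℕ) + 1
       if p ≤ n - m then (p : ℂ) / (n * (k + n))
       else if p ≤ n then ((p : ℂ) - 1) / (n * (k + n))
       else -1 / n)) :
    Γ.mulVec c = (fun i : Fin (n + 1) => if (i : ℕ) = n - 1 then 1 else 0) ∧
    Γ.mulVec c (Fin.last n) = 0 ∧
    dotProduct c (Γ.mulVec c) = ((n : ℂ) - 1) / (n * (k + n)) :=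
  Vnm_dual_momentum_coords_general n m hm1 hm2 k hk Γ hΓ c hc
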